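/- arXiv:2307.03576 — 3 statements merged into one kernel-verified Lean document; each statement's English description precedes it below -/
import Mathlib

section
/- There exists a scalar c₁ ∈ ℝ such that E[Xᵀ y⃗ y⃗ᵀ X] = c₁ I_d, where the expectation is over the context (x₁, y₁, …, xₙ, yₙ). -/
open MeasureTheory ProbabilityTheory Matrix

noncomputable section

/-- Vectors in `ℝ^d`. -/
abbrev Vec (d : ℕ) : Type := Fin d → ℝ

/-- The standard Gaussian measure `N(0, I_d)` on `ℝ^d`. -/
def stdGaussian (d : ℕ) : Measure (Vec d) :=
  Measure.pi fun _ : Fin d => gaussianReal 0 1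

instance (d : ℕ) : IsProbabilityMeasure (stdGaussian d) := by
  unfold _root_.stdGaussian; infer_instance

/-- Sample space for the context: the covariates `x₁, …, xₙ`, the weight vector `w`,
and the noises `ε₁, …, εₙ`. -/
abbrev Ctx (d n : ℕ) : Type := (Fin n → Vec d) × Vec d × (Fin n → ℝ)

/-- Joint law of the context: `xᵢ` i.i.d. `N(0, I_d)`, `w ~ N(0, I_d)`, and `εᵢ` i.i.d.
`N(0, σ²)`, all independent. -/
def μctx (d n : ℕ) (σ : ℝ) : Measure (Ctx d n) :=
  (Measure.pi fun _ : Fin n => stdGaussian d).prod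
    ((stdGaussian d).prod
      (Measure.pi fun _ : Fin n => gaussianReal 0 ⟨σ^2, sq_nonneg σ⟩))

/-- The covariate `xᵢ`. -/
def xv {d n : ℕ} (i : Fin n) (ω : Ctx d n) : Vec d := ω.1 i

/-- The response `yᵢ = wᵀxᵢ + εᵢ`. -/
def yv {d n : ℕ} (i : Fin n) (ω : Ctx d n) : ℝ := ω.2.1 ⬝ᵥ ω.1 i + ω.2.2 i

/-- The design matrix `X ∈ ℝ^{n×d}` whose `i`-th row is `xᵢᵀ`. -/
def Xmat {d n : ℕ} (ω : Ctx d n) : Matrix (Fin n) (Fin d) ℝ :=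
  Matrix.of fun i j => xv i ω j

/-- The response vector `y⃗ = (y₁, …, yₙ)`. -/
def Yvec {d n : ℕ} (ω : Ctx d n) : Fin n → ℝ := fun i => yv i ω

/-- The vector `Xᵀy⃗ ∈ ℝ^d`. -/
def XtY {d n : ℕ} (ω : Ctx d n) : Vec d := (Xmat ω)ᵀ.mulVec (Yvec ω)

/-- The ridge-regression estimator `ŵ = (XᵀX + σ²I)⁻¹Xᵀy⃗`. -/
def ridge {d n : ℕ} (σ : ℝ) (ω : Ctx d n) : Vec d :=
  (((Xmat ω)ᵀ * Xmat ω + σ^2 • (1 : Matrix (Fin d) (Fin d) ℝ))⁻¹ * (Xmat ω)ᵀ).mulVec (Yvec ω)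

/-- The learning rate `η* = E[ŵᵀXᵀy⃗] / E[y⃗ᵀXXᵀy⃗]`. -/
def etaStar (d n : ℕ) (σ : ℝ) : ℝ :=
  (∫ ω, ridge σ ω ⬝ᵥ XtY ω ∂ (μctx d n σ)) /
  (∫ ω, Yvec ω ⬝ᵥ ((Xmat ω * (Xmat ω)ᵀ).mulVec (Yvec ω)) ∂ (μctx d n σ))

/-! ### Auxiliary lemmas -/

/-- The context transform induced by a map on `Vec d` applied to all covariates and to `w`. -/
def ctxMap {d n : ℕ} (W : Vec d → Vec d) (ω : Ctx d n) : Ctx d n :=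
  (fun k => W (ω.1 k), W ω.2.1, ω.2.2)

lemma XtY_apply {d n : ℕ} (ω : Ctx d n) (m : Fin d) :
    XtY ω m = ∑ k, xv k ω m * yv k ω := by
  simp [XtY, Matrix.mulVec, dotProduct, Xmat, Yvec]

lemma ctxMap_measurePreserving {d n : ℕ} {σ : ℝ} {W : Vec d → Vec d}
    (hW : MeasurePreserving W (stdGaussian d) (stdGaussian d)) :
    MeasurePreserving (ctxMap (n := n) W) (μctx d n σ) (μctx d n σ) := by
  have h1 : MeasurePreserving (fun xs : Fin n → Vec d => fun k => W (xs k))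
      (Measure.pi fun _ : Fin n => stdGaussian d) (Measure.pi fun _ : Fin n => stdGaussian d) :=
    measurePreserving_pi _ _ (fun _ => hW)
  haveI : IsProbabilityMeasure (gaussianReal 0 ⟨σ^2, sq_nonneg σ⟩) :=
    instIsProbabilityMeasureGaussianReal _ _
  haveI : SFinite ((stdGaussian d).prod
      (Measure.pi fun _ : Fin n => gaussianReal 0 ⟨σ^2, sq_nonneg σ⟩)) := inferInstance
  have h2 := (hW.prod (MeasurePreserving.id
      (Measure.pi fun _ : Fin n => gaussianReal 0 ⟨σ^2, sq_nonneg σ⟩)))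
  exact h1.prod h2

lemma ctx_integral {d n : ℕ} (σ : ℝ) {W : Vec d → Vec d}
    (hW : MeasurePreserving W (stdGaussian d) (stdGaussian d))
    (hinv : Function.Involutive W) (f : Ctx d n → ℝ) :
    ∫ ω, f ω ∂ (μctx d n σ) = ∫ ω, f (ctxMap W ω) ∂ (μctx d n σ) := by
  have hTinv : Function.Involutive (ctxMap (n := n) W) := by
    intro ω; simp [ctxMap, hinv _]
  have hpres := ctxMap_measurePreserving (n := n) (σ := σ) hW
  let Teq : Ctx d n ≃ᵐ Ctx d n :=
    { toEquiv := hTinv.toPerm _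
      measurable_toFun := hpres.measurable
      measurable_invFun := hpres.measurable }
  calc ∫ ω, f ω ∂ (μctx d n σ)
      = ∫ ω, f ω ∂ ((μctx d n σ).map Teq) := by
        congr 1
        exact (hpres.map_eq).symm
    _ = ∫ ω, f (ctxMap W ω) ∂ (μctx d n σ) := integral_map_equiv Teq f

/-- Negation of one coordinate is measure preserving for the standard Gaussian. -/
lemma negc_measurePreserving {d : ℕ} (i : Fin d) :
    MeasurePreserving (fun v : Vec d => fun m => if m = i then -v m else v m)
      (stdGaussian d) (stdGaussian d) := by
  have hg : (gaussianReal 0 1).map (fun x => -x) = gaussianReal 0 1 := by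
    have h := gaussianReal_map_const_mul (μ := 0) (v := 1) (-1)
    have he : (fun x : ℝ => -x) = (fun x : ℝ => (-1) * x) := by funext x; ring
    rw [he, h]; norm_num
  have := measurePreserving_pi (fun _ : Fin d => gaussianReal 0 1)
    (fun _ : Fin d => gaussianReal 0 1)
    (f := fun m x => if m = i then -x else x) ?_
  · exact this
  · intro m
    by_cases hm : m = i
    · subst hm; simp only [if_pos rfl]
      exact ⟨measurable_neg, hg⟩
    · simp only [if_neg hm]
      exact MeasurePreserving.id _

/-- Precomposition with a permutation of coordinates is measure preserving for the
standard Gaussian. -/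
lemma perm_measurePreserving {d : ℕ} (e : Fin d ≃ Fin d) :
    MeasurePreserving (fun v : Vec d => fun m => v (e m))
      (stdGaussian d) (stdGaussian d) := by
  have h := measurePreserving_arrowCongr' (fun _ : Fin d => gaussianReal 0 1)
    (fun _ : Fin d => gaussianReal 0 1) e.symm (MeasurableEquiv.refl ℝ)
    (fun _ => MeasurePreserving.id _)
  exact h

lemma dot_negc {d : ℕ} (i : Fin d) (w x : Vec d) :
    (fun m => if m = i then -w m else w m) ⬝ᵥ (fun m => if m = i then -x m else x m)
      = w ⬝ᵥ x := by
  unfold dotProduct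
  refine Finset.sum_congr rfl fun m _ => ?_
  by_cases hm : m = i <;> simp [hm]

lemma dot_perm {d : ℕ} (e : Fin d ≃ Fin d) (w x : Vec d) :
    (fun m => w (e m)) ⬝ᵥ (fun m => x (e m)) = w ⬝ᵥ x := by
  unfold dotProduct
  exact Equiv.sum_comp e (fun m => w m * x m)

lemma yv_ctxMap_negc {d n : ℕ} (i : Fin d) (k : Fin n) (ω : Ctx d n) :
    yv k (ctxMap (fun v : Vec d => fun m => if m = i then -v m else v m) ω) = yv k ω := by
  simp only [yv, ctxMap]
  rw [dot_negc]

lemma yv_ctxMap_perm {d n : ℕ} (e : Fin d ≃ Fin d) (k : Fin n) (ω : Ctx d n) :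
    yv k (ctxMap (fun v : Vec d => fun m => v (e m)) ω) = yv k ω := by
  simp only [yv, ctxMap]
  rw [dot_perm]

lemma XtY_ctxMap_negc {d n : ℕ} (i : Fin d) (ω : Ctx d n) (m : Fin d) :
    XtY (ctxMap (fun v : Vec d => fun m => if m = i then -v m else v m) ω) m
      = if m = i then -XtY ω m else XtY ω m := by
  rw [XtY_apply]
  by_cases hm : m = i
  · subst hm
    simp only [if_pos rfl, XtY_apply, ← Finset.sum_neg_distrib]
    refine Finset.sum_congr rfl fun k _ => ?_
    rw [yv_ctxMap_negc]
    simp [ctxMap, xv]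
  · simp only [if_neg hm, XtY_apply]
    refine Finset.sum_congr rfl fun k _ => ?_
    rw [yv_ctxMap_negc]
    simp [ctxMap, xv, hm]

lemma XtY_ctxMap_perm {d n : ℕ} (e : Fin d ≃ Fin d) (ω : Ctx d n) (m : Fin d) :
    XtY (ctxMap (fun v : Vec d => fun m => v (e m)) ω) m = XtY ω (e m) := by
  rw [XtY_apply, XtY_apply]
  refine Finset.sum_congr rfl fun k _ => ?_
  rw [yv_ctxMap_perm]
  simp [ctxMap, xv]

/-- **Lemma 3.4, first half.**  `E[Xᵀ y⃗ y⃗ᵀ X]` is a scalar multiple of the identity. -/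
theorem expectation_XtYYtX_scalar_id (d n : ℕ) (hd : 1 ≤ d) (hn : 1 ≤ n)
    (σ : ℝ) (hσ : 0 < σ) :
    ∃ c₁ : ℝ,
      (Matrix.of fun i j : Fin d => ∫ ω, XtY ω i * XtY ω j ∂ (μctx d n σ))
        = c₁ • (1 : Matrix (Fin d) (Fin d) ℝ) := by
  set i0 : Fin d := ⟨0, hd⟩
  refine ⟨∫ ω, XtY ω i0 * XtY ω i0 ∂ (μctx d n σ), ?_⟩
  ext i j
  rw [Matrix.of_apply, Matrix.smul_apply, Matrix.one_apply, smul_eq_mul]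
  by_cases hij : i = j
  · subst hij
    rw [if_pos rfl, mul_one]
    have key := ctx_integral (n := n) σ (perm_measurePreserving (Equiv.swap i i0))
      (fun v => by funext m; simp [Equiv.swap_apply_self])
      (fun ω : Ctx d n => XtY ω i0 * XtY ω i0)
    rw [key]
    refine integral_congr_ae (Filter.Eventually.of_forall fun ω => ?_)
    simp only [XtY_ctxMap_perm, Equiv.swap_apply_right]
  · rw [if_neg hij, mul_zero]
    have key := ctx_integral (n := n) σ (negc_measurePreserving i)
      (fun v => by funext m; by_cases hm : m = i <;> simp [hm])
      (fun ω : Ctx d n => XtY ω i * XtY ω j)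
    have : ∫ ω, XtY ω i * XtY ω j ∂ (μctx d n σ)
        = -∫ ω, XtY ω i * XtY ω j ∂ (μctx d n σ) := by
      conv_lhs => rw [key]
      rw [← integral_neg]
      refine integral_congr_ae (Filter.Eventually.of_forall fun ω => ?_)
      simp only [XtY_ctxMap_negc, if_neg (fun h : j = i => hij h.symm), ite_true, eq_self_iff_true]
      ring
    linarith
end
end

section
/- There exists a scalar c₂ ∈ ℝ such that E[Xᵀ y⃗ ŵᵀ] = c₂ I_d, where ŵ = (XᵀX + σ²I)⁻¹Xᵀy⃗ is the ridge-regression estimator with regularization strength σ² and the expectation is over the context (x₁, y₁, …, xₙ, yₙ). -/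
open MeasureTheory ProbabilityTheory Matrix

noncomputable section

section AuxLemmas

variable {d n : ℕ}

/-! ### Action of an orthogonal matrix on the context -/

def QCtx (Q : Matrix (Fin d) (Fin d) ℝ) (ω : Ctx d n) : Ctx d n :=
  (fun i => Q.mulVec (ω.1 i), Q.mulVec ω.2.1, ω.2.2)

lemma Xmat_QCtx (Q : Matrix (Fin d) (Fin d) ℝ) (ω : Ctx d n) :
    Xmat (QCtx Q ω) = Xmat ω * Qᵀ := by
  ext i j
  simp [Xmat, xv, QCtx, Matrix.mul_apply, Matrix.mulVec, dotProduct, mul_comm]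

lemma Yvec_QCtx (Q : Matrix (Fin d) (Fin d) ℝ) (hQ : Qᵀ * Q = 1) (ω : Ctx d n) :
    Yvec (QCtx Q ω) = Yvec ω := by
  funext i
  have : Q.mulVec ω.2.1 ⬝ᵥ Q.mulVec (ω.1 i) = ω.2.1 ⬝ᵥ ω.1 i := by
    rw [Matrix.dotProduct_mulVec, ← Matrix.vecMul_transpose, Matrix.vecMul_vecMul, hQ,
      Matrix.vecMul_one]
  simp [Yvec, yv, QCtx, this]

lemma XtY_QCtx (Q : Matrix (Fin d) (Fin d) ℝ) (hQ : Qᵀ * Q = 1) (ω : Ctx d n) :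
    XtY (QCtx Q ω) = Q.mulVec (XtY ω) := by
  rw [XtY, Xmat_QCtx, Yvec_QCtx Q hQ, Matrix.transpose_mul, Matrix.transpose_transpose,
    ← Matrix.mulVec_mulVec]
  rfl

lemma Mpos {σ : ℝ} (hσ : 0 < σ) (X : Matrix (Fin n) (Fin d) ℝ) :
    (Xᵀ * X + σ^2 • (1 : Matrix (Fin d) (Fin d) ℝ)).PosDef := by
  refine Matrix.PosDef.posSemidef_add ?_ ?_
  · simpa [Matrix.conjTranspose_eq_transpose_of_trivial] using
      Matrix.posSemidef_conjTranspose_mul_self X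
  · have : σ^2 • (1 : Matrix (Fin d) (Fin d) ℝ) = Matrix.diagonal (fun _ => σ^2) := by
      ext i j
      by_cases h : i = j <;> simp [Matrix.one_apply, Matrix.diagonal, h]
    rw [this]
    exact Matrix.posDef_diagonal_iff.mpr fun _ => pow_pos hσ 2

lemma ridge_QCtx (σ : ℝ) (hσ : 0 < σ) (Q : Matrix (Fin d) (Fin d) ℝ)
    (hQ : Qᵀ * Q = 1) (hQ' : Q * Qᵀ = 1) (ω : Ctx d n) :
    ridge σ (QCtx Q ω) = Q.mulVec (ridge σ ω) := by
  set X := Xmat ω with hX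
  set M := Xᵀ * X + σ^2 • (1 : Matrix (Fin d) (Fin d) ℝ) with hM
  have hMM : M * M⁻¹ = 1 := Matrix.mul_nonsing_inv _ ((Mpos hσ X).det_pos.ne'.isUnit)
  have hM' : (X * Qᵀ)ᵀ * (X * Qᵀ) + σ^2 • (1 : Matrix (Fin d) (Fin d) ℝ) = Q * M * Qᵀ := by
    rw [hM, Matrix.transpose_mul, Matrix.transpose_transpose, Matrix.mul_add,
      Matrix.add_mul]
    congr 1
    · simp only [Matrix.mul_assoc]
    · rw [Matrix.mul_smul, Matrix.mul_one, Matrix.smul_mul, hQ']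
  have hinv : (Q * M * Qᵀ)⁻¹ = Q * M⁻¹ * Qᵀ := by
    refine Matrix.inv_eq_right_inv ?_
    simp only [Matrix.mul_assoc]
    rw [← Matrix.mul_assoc Qᵀ Q, hQ, one_mul, ← Matrix.mul_assoc M, hMM, one_mul, hQ']
  have hkey : Q * M⁻¹ * Qᵀ * (X * Qᵀ)ᵀ = Q * (M⁻¹ * Xᵀ) := by
    rw [Matrix.transpose_mul, Matrix.transpose_transpose]
    simp only [Matrix.mul_assoc]
    rw [← Matrix.mul_assoc Qᵀ Q, hQ, Matrix.one_mul]
  rw [ridge, Xmat_QCtx, Yvec_QCtx Q hQ, ← hX, hM', hinv, hkey, ← Matrix.mulVec_mulVec,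
    ridge, ← hX, ← hM]

/-! ### Measure preservation -/

lemma measurable_mulVec (Q : Matrix (Fin d) (Fin d) ℝ) :
    Measurable fun v : Vec d => Q.mulVec v :=
  measurable_pi_lambda _ fun j => by
    simpa [Matrix.mulVec, dotProduct] using
      Finset.measurable_sum Finset.univ
        (fun k _ => (measurable_pi_apply (X := fun _ : Fin d => ℝ) k).const_mul (Q j k))

lemma measurable_QCtx (Q : Matrix (Fin d) (Fin d) ℝ) :
    Measurable (QCtx Q (n := n)) := by
  refine Measurable.prodMk ?_ (Measurable.prodMk ?_ ?_)
  · exact measurable_pi_lambda _ fun i =>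
      (measurable_mulVec Q).comp ((measurable_pi_apply i).comp measurable_fst)
  · exact (measurable_mulVec Q).comp (measurable_fst.comp measurable_snd)
  · exact measurable_snd.comp measurable_snd

def QEquiv (Q : Matrix (Fin d) (Fin d) ℝ) (hQQ : Q * Q = 1) : Ctx d n ≃ᵐ Ctx d n where
  toFun := QCtx Q
  invFun := QCtx Q
  left_inv ω := by
    simp [QCtx, Matrix.mulVec_mulVec, hQQ, Matrix.one_mulVec]
  right_inv ω := by
    simp [QCtx, Matrix.mulVec_mulVec, hQQ, Matrix.one_mulVec]
  measurable_toFun := measurable_QCtx Q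
  measurable_invFun := measurable_QCtx Q

lemma QCtx_measurePreserving (σ : ℝ) (Q : Matrix (Fin d) (Fin d) ℝ)
    (hT : MeasurePreserving (fun v : Vec d => Q.mulVec v) (stdGaussian d) (stdGaussian d)) :
    MeasurePreserving (QCtx Q (n := n)) (μctx d n σ) (μctx d n σ) := by
  have h1 : MeasurePreserving (fun x : Fin n → Vec d => fun i => Q.mulVec (x i))
      (Measure.pi fun _ => stdGaussian d) (Measure.pi fun _ => stdGaussian d) :=
    measurePreserving_pi _ _ (fun _ => hT)
  have : IsProbabilityMeasure (gaussianReal 0 ⟨σ^2, sq_nonneg σ⟩) :=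
    instIsProbabilityMeasureGaussianReal _ _
  exact h1.prod (hT.prod (MeasurePreserving.id _))

lemma integral_QCtx (σ : ℝ) (Q : Matrix (Fin d) (Fin d) ℝ) (hQQ : Q * Q = 1)
    (hT : MeasurePreserving (fun v : Vec d => Q.mulVec v) (stdGaussian d) (stdGaussian d))
    (f : Ctx d n → ℝ) :
    ∫ ω, f (QCtx Q ω) ∂(μctx d n σ) = ∫ ω, f ω ∂(μctx d n σ) :=
  (QCtx_measurePreserving σ Q hT).integral_comp
    (QEquiv Q hQQ (n := n)).measurableEmbedding f

lemma mp_const_mul (c : ℝ) (hc : c = 1 ∨ c = -1) :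
    MeasurePreserving (fun x : ℝ => c * x) (gaussianReal 0 1) (gaussianReal 0 1) := by
  refine ⟨measurable_const_mul c, ?_⟩
  rw [show (fun x : ℝ => c * x) = (c * ·) from rfl, gaussianReal_map_const_mul]
  rcases hc with h | h <;> subst h <;> · congr 1 <;> simp

lemma mp_signs (s : Fin d → ℝ) (hs : ∀ k, s k = 1 ∨ s k = -1) :
    MeasurePreserving (fun v : Vec d => fun k => s k * v k)
      (stdGaussian d) (stdGaussian d) :=
  measurePreserving_pi _ _ (fun k => mp_const_mul (s k) (hs k))

lemma mp_perm (e : Equiv.Perm (Fin d)) :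
    MeasurePreserving (fun v : Vec d => fun j => v (e j))
      (stdGaussian d) (stdGaussian d) := by
  have h := measurePreserving_piCongrLeft (fun _ : Fin d => gaussianReal 0 1) e.symm
  have heq : ⇑(MeasurableEquiv.piCongrLeft (fun _ : Fin d => ℝ) e.symm)
      = fun v : Vec d => fun j => v (e j) := by
    funext v j
    have h2 := MeasurableEquiv.piCongrLeft_apply_apply e.symm (β := fun _ : Fin d => ℝ) v (e j)
    simpa using h2
  rw [heq] at h
  exact h

/-! ### The two special orthogonal matrices -/

def permM (e : Equiv.Perm (Fin d)) : Matrix (Fin d) (Fin d) ℝ :=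
  Matrix.of fun a b => if b = e a then 1 else 0

lemma permM_mulVec (e : Equiv.Perm (Fin d)) (v : Fin d → ℝ) :
    (permM e).mulVec v = fun k => v (e k) := by
  funext k
  simp [permM, Matrix.mulVec, dotProduct, ite_mul]

lemma permM_symm (e : Equiv.Perm (Fin d)) (he : ∀ x, e (e x) = x) :
    (permM e)ᵀ = permM e := by
  ext a b
  simp only [Matrix.transpose_apply, permM, Matrix.of_apply]
  have : a = e b ↔ b = e a := by
    constructor <;> intro h <;> subst h <;> exact (he _).symm
  simp [this]

lemma permM_sq (e : Equiv.Perm (Fin d)) (he : ∀ x, e (e x) = x) :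
    permM e * permM e = 1 := by
  ext a b
  rw [Matrix.mul_apply, Matrix.one_apply]
  simp only [permM, Matrix.of_apply]
  rw [Finset.sum_eq_single (e a)]
  · simp [he, eq_comm]
  · intro k _ hk
    simp [hk]
  · simp

lemma diag_sq (s : Fin d → ℝ) (hs : ∀ k, s k = 1 ∨ s k = -1) :
    Matrix.diagonal s * Matrix.diagonal s = 1 := by
  rw [Matrix.diagonal_mul_diagonal]
  ext a b
  by_cases hab : a = b
  · subst hab
    rcases hs a with h | h <;> simp [Matrix.diagonal, Matrix.one_apply, h]
  · simp [Matrix.diagonal, Matrix.one_apply, hab]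

end AuxLemmas

/-- **Lemma 3.4, second half.**  `E[Xᵀ y⃗ ŵᵀ]` is a scalar multiple of the identity,
where `ŵ = (XᵀX + σ²I)⁻¹Xᵀy⃗` is the ridge-regression estimator. -/
theorem expectation_XtY_ridge_scalar_id (d n : ℕ) (hd : 1 ≤ d) (hn : 1 ≤ n)
    (σ : ℝ) (hσ : 0 < σ) :
    ∃ c₂ : ℝ,
      (Matrix.of fun i j : Fin d => ∫ ω, XtY ω i * ridge σ ω j ∂ (μctx d n σ))
        = c₂ • (1 : Matrix (Fin d) (Fin d) ℝ) := by
  have hd0 : 0 < d := hd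
  set i0 : Fin d := ⟨0, hd0⟩ with hi0
  set μ := μctx d n σ with hμ
  have key : ∀ (Q : Matrix (Fin d) (Fin d) ℝ), Qᵀ = Q → Q * Q = 1 →
      MeasurePreserving (fun v : Vec d => Q.mulVec v) (stdGaussian d) (stdGaussian d) →
      ∀ i j : Fin d,
        (∫ ω, XtY ω i * ridge σ ω j ∂μ)
          = ∫ ω, Q.mulVec (XtY ω) i * Q.mulVec (ridge σ ω) j ∂μ := by
    intro Q hsym hQQ hT i j
    have hQ : Qᵀ * Q = 1 := by rw [hsym]; exact hQQ
    have hQ' : Q * Qᵀ = 1 := by rw [hsym]; exact hQQ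
    have h := integral_QCtx (n := n) σ Q hQQ hT (fun ω : Ctx d n => XtY ω i * ridge σ ω j)
    rw [← h]
    congr 1
    funext ω
    rw [XtY_QCtx Q hQ, ridge_QCtx σ hσ Q hQ hQ']
  have hoff : ∀ i j : Fin d, i ≠ j →
      (∫ ω, XtY ω i * ridge σ ω j ∂μ) = 0 := by
    intro i j hij
    set s : Fin d → ℝ := fun k => if k = i then -1 else 1 with hsdef
    have hs : ∀ k, s k = 1 ∨ s k = -1 := fun k => by
      by_cases h : k = i <;> simp [hsdef, h]
    have hmv : (fun v : Vec d => (Matrix.diagonal s).mulVec v)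
        = fun v k => s k * v k :=
      funext fun v => funext fun k => Matrix.mulVec_diagonal s v k
    have h := key (Matrix.diagonal s) (Matrix.diagonal_transpose s) (diag_sq s hs)
      (by rw [hmv]; exact mp_signs s hs) i j
    have h2 : ∀ ω : Ctx d n,
        (Matrix.diagonal s).mulVec (XtY ω) i * (Matrix.diagonal s).mulVec (ridge σ ω) j
          = -(XtY ω i * ridge σ ω j) := by
      intro ω
      rw [Matrix.mulVec_diagonal, Matrix.mulVec_diagonal]
      have hsi : s i = -1 := by simp [hsdef]
      have hsj : s j = 1 := by simp [hsdef, Ne.symm hij]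
      rw [hsi, hsj]
      ring
    rw [show (fun ω => (Matrix.diagonal s).mulVec (XtY ω) i
          * (Matrix.diagonal s).mulVec (ridge σ ω) j)
        = fun ω => -(XtY ω i * ridge σ ω j) from funext h2, integral_neg] at h
    linarith
  have hdiag : ∀ i : Fin d,
      (∫ ω, XtY ω i * ridge σ ω i ∂μ) = ∫ ω, XtY ω i0 * ridge σ ω i0 ∂μ := by
    intro i
    set e : Equiv.Perm (Fin d) := Equiv.swap i i0 with hedef
    have he : ∀ x, e (e x) = x := fun x => Equiv.swap_apply_self i i0 x
    have hmv : (fun v : Vec d => (permM e).mulVec v) = fun v k => v (e k) :=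
      funext fun v => permM_mulVec e v
    have h := key (permM e) (permM_symm e he) (permM_sq e he)
      (by rw [hmv]; exact mp_perm e) i i
    have hei : e i = i0 := Equiv.swap_apply_left i i0
    rw [h]
    congr 1
    funext ω
    rw [permM_mulVec, permM_mulVec]
    simp only [hei]
  refine ⟨∫ ω, XtY ω i0 * ridge σ ω i0 ∂μ, ?_⟩
  ext i j
  by_cases h : i = j
  · subst h
    simp only [Matrix.of_apply, Matrix.smul_apply, Matrix.one_apply_eq, smul_eq_mul, mul_one]
    exact hdiag i
  · simp only [Matrix.of_apply, Matrix.smul_apply, Matrix.one_apply_ne h, smul_eq_mul, mul_zero]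
    exact hoff i j h
end
end

section
/- For every matrix A ∈ ℝ^{d×(d+1)}, one has E[G Aᵀ ŵ] = η* · E[G Aᵀ Xᵀ y⃗], where η* = E[ŵᵀXᵀy⃗] / E[y⃗ᵀXXᵀy⃗] and the expectations are over the context (x₁, y₁, …, xₙ, yₙ). -/
open MeasureTheory ProbabilityTheory Matrix

noncomputable section

/-- The token `vᵢ = (xᵢ, yᵢ) ∈ ℝ^{d+1}`. -/
def tok {d n : ℕ} (i : Fin n) (ω : Ctx d n) : Vec (d+1) :=
  Fin.snoc (xv i ω) (yv i ω)

/-- `G = Σ_{i=1}^n vᵢvᵢᵀ ∈ ℝ^{(d+1)×(d+1)}`. -/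
def Gmat {d n : ℕ} (ω : Ctx d n) : Matrix (Fin (d+1)) (Fin (d+1)) ℝ :=
  ∑ i : Fin n, vecMulVec (tok i ω) (tok i ω)

namespace Eq22

instance gaussVarInst (σ : ℝ) : IsProbabilityMeasure (gaussianReal 0 ⟨σ^2, sq_nonneg σ⟩) := by
  exact instIsProbabilityMeasureGaussianReal 0 _

instance (d n : ℕ) (σ : ℝ) : IsProbabilityMeasure (μctx d n σ) := by
  unfold μctx _root_.stdGaussian; infer_instance

/-! ### Algebra -/

/-- The regularized Gram matrix. -/
def Cm {d n : ℕ} (σ : ℝ) (ω : Ctx d n) : Matrix (Fin d) (Fin d) ℝ :=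
  (Xmat ω)ᵀ * Xmat ω + σ^2 • (1 : Matrix (Fin d) (Fin d) ℝ)

lemma ridge_eq {d n : ℕ} (σ : ℝ) (ω : Ctx d n) :
    ridge σ ω = (Cm σ ω)⁻¹.mulVec (XtY ω) := by
  unfold ridge Cm XtY
  rw [← Matrix.mulVec_mulVec]

lemma Cm_posDef {d n : ℕ} {σ : ℝ} (hσ : 0 < σ) (ω : Ctx d n) : (Cm σ ω).PosDef := by
  unfold Cm
  have hX := Matrix.posSemidef_conjTranspose_mul_self (Xmat ω)
  rw [Matrix.conjTranspose_eq_transpose_of_trivial] at hX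
  exact Matrix.PosDef.posSemidef_add hX (Matrix.PosDef.one.smul (by positivity))

lemma Cm_isUnit_det {d n : ℕ} {σ : ℝ} (hσ : 0 < σ) (ω : Ctx d n) : IsUnit (Cm σ ω).det :=
  isUnit_iff_ne_zero.2 (ne_of_gt (Cm_posDef hσ ω).det_pos)

lemma Cm_mulVec_ridge {d n : ℕ} {σ : ℝ} (hσ : 0 < σ) (ω : Ctx d n) :
    Cm σ ω *ᵥ ridge σ ω = XtY ω := by
  rw [ridge_eq, Matrix.mulVec_mulVec, Matrix.mul_nonsing_inv _ (Cm_isUnit_det hσ ω),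
    Matrix.one_mulVec]

/-- the core quantitative bound on the ridge estimator -/
lemma ridge_sq_sum_le {d n : ℕ} {σ : ℝ} (hσ : 0 < σ) (ω : Ctx d n) :
    σ^4 * (∑ m, ridge σ ω m ^ 2) ≤ ∑ m, XtY ω m ^ 2 := by
  set u := ridge σ ω with hu
  set s := XtY ω with hs
  have hCu : Cm σ ω *ᵥ u = s := Cm_mulVec_ridge hσ ω
  have h1 : σ^2 * (∑ m, u m ^ 2) ≤ u ⬝ᵥ s := by
    rw [← hCu]
    unfold Cm
    rw [Matrix.add_mulVec, dotProduct_add, Matrix.smul_mulVec, Matrix.one_mulVec]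
    have hXX : (0:ℝ) ≤ u ⬝ᵥ ((Xmat ω)ᵀ * Xmat ω) *ᵥ u := by
      rw [← Matrix.mulVec_mulVec, Matrix.dotProduct_mulVec, ← Matrix.mulVec_transpose,
        Matrix.transpose_transpose]
      exact Finset.sum_nonneg fun i _ => mul_self_nonneg _
    have h3 : u ⬝ᵥ (σ^2 • u) = σ^2 * ∑ m, u m ^ 2 := by
      rw [dotProduct_smul]
      unfold dotProduct
      simp [smul_eq_mul, Finset.mul_sum, sq]
    rw [h3]; linarith
  have h2 : (u ⬝ᵥ s)^2 ≤ (∑ m, u m ^ 2) * (∑ m, s m ^ 2) := by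
    unfold dotProduct
    exact Finset.sum_mul_sq_le_sq_mul_sq Finset.univ u s
  have hA : (0:ℝ) ≤ ∑ m, u m ^ 2 := Finset.sum_nonneg fun m _ => sq_nonneg _
  have hB : (0:ℝ) ≤ ∑ m, s m ^ 2 := Finset.sum_nonneg fun m _ => sq_nonneg _
  rcases eq_or_lt_of_le hA with hA0 | hA0
  · rw [← hA0]; simpa using hB
  · have h4 : (σ^2 * (∑ m, u m ^ 2))^2 ≤ (u ⬝ᵥ s)^2 := by
      apply pow_le_pow_left₀ (by positivity) h1
    nlinarith [sq_nonneg σ]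
end Eq22
namespace Eq22

/-! ### Signed permutation matrices and the associated transformations -/

/-- signed permutation matrix -/
def Qm {d : ℕ} (e : Equiv.Perm (Fin d)) (ε : Fin d → ℝ) : Matrix (Fin d) (Fin d) ℝ :=
  Matrix.of fun j k => if k = e j then ε j else 0

lemma Qm_mulVec {d : ℕ} (e : Equiv.Perm (Fin d)) (ε : Fin d → ℝ) (v : Vec d) :
    Qm e ε *ᵥ v = fun j => ε j * v (e j) := by
  funext j
  simp [Qm, Matrix.mulVec, dotProduct]

lemma Qm_mul_transpose {d : ℕ} {e : Equiv.Perm (Fin d)} {ε : Fin d → ℝ}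
    (hε : ∀ j, ε j ^ 2 = 1) : Qm e ε * (Qm e ε)ᵀ = 1 := by
  ext j i
  simp only [Matrix.mul_apply, Matrix.transpose_apply, Qm, Matrix.of_apply, ite_mul, zero_mul,
    mul_ite, mul_zero]
  rw [Finset.sum_eq_single (e j)]
  · by_cases h : i = j
    · subst h
      simp [← sq, hε, Matrix.one_apply]
    · have h2 : ¬ (e j = e i) := fun hc => h (e.injective hc).symm
      simp [Matrix.one_apply, h, Ne.symm h, h2, fun hc : e j = e i => h (e.injective hc).symm]
  · intro k _ hk
    simp [hk]
  · simp

lemma Qm_transpose_mul {d : ℕ} {e : Equiv.Perm (Fin d)} {ε : Fin d → ℝ}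
    (hε : ∀ j, ε j ^ 2 = 1) : (Qm e ε)ᵀ * Qm e ε = 1 := by
  ext k l
  simp only [Matrix.mul_apply, Matrix.transpose_apply, Qm, Matrix.of_apply, ite_mul, zero_mul,
    mul_ite, mul_zero]
  rw [Finset.sum_eq_single (e.symm k)]
  · by_cases h : l = k
    · subst h
      simp [← sq, hε, Matrix.one_apply]
    · have h2 : ¬ (l = e (e.symm k)) := fun hc => h (by simpa using hc)
      simp [Matrix.one_apply, h, Ne.symm h, h2]
  · intro j _ hj
    have : k ≠ e j := fun hc => hj (by simp [hc])
    simp [this]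
  · simp

/-- Transformation of the context by an orthogonal matrix acting on covariates and weights. -/
def TQ {d n : ℕ} (Q : Matrix (Fin d) (Fin d) ℝ) (ω : Ctx d n) : Ctx d n :=
  (fun i => Q *ᵥ ω.1 i, Q *ᵥ ω.2.1, ω.2.2)

/-- Sign flip of weights and noise. -/
def Tneg {d n : ℕ} (ω : Ctx d n) : Ctx d n := (ω.1, -ω.2.1, -ω.2.2)

section TQalgebra

variable {d n : ℕ} {Q : Matrix (Fin d) (Fin d) ℝ}

lemma Xmat_TQ (ω : Ctx d n) : Xmat (TQ Q ω) = Xmat ω * Qᵀ := by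
  ext i j
  simp [Xmat, xv, TQ, Matrix.mulVec, Matrix.mul_apply, dotProduct, mul_comm]

lemma yv_TQ (hQTQ : Qᵀ * Q = 1) (i : Fin n) (ω : Ctx d n) : yv i (TQ Q ω) = yv i ω := by
  unfold yv TQ
  simp only
  congr 1
  calc (Q *ᵥ ω.2.1) ⬝ᵥ (Q *ᵥ ω.1 i)
      = ((ω.2.1 ᵥ* Qᵀ) ᵥ* Q) ⬝ᵥ ω.1 i := by
        rw [Matrix.dotProduct_mulVec, ← Matrix.mulVec_transpose Qᵀ, Matrix.transpose_transpose]
    _ = ω.2.1 ⬝ᵥ ω.1 i := by rw [Matrix.vecMul_vecMul, hQTQ, Matrix.vecMul_one]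

lemma Yvec_TQ (hQTQ : Qᵀ * Q = 1) (ω : Ctx d n) : Yvec (TQ Q ω) = Yvec ω := by
  funext i; exact yv_TQ hQTQ i ω

lemma XtY_TQ (hQTQ : Qᵀ * Q = 1) (ω : Ctx d n) : XtY (TQ Q ω) = Q *ᵥ XtY ω := by
  unfold XtY
  rw [Xmat_TQ, Yvec_TQ hQTQ, Matrix.transpose_mul, Matrix.transpose_transpose,
    ← Matrix.mulVec_mulVec]

lemma Cm_TQ (hQQT : Q * Qᵀ = 1) (σ : ℝ) (ω : Ctx d n) :
    Cm σ (TQ Q ω) = Q * Cm σ ω * Qᵀ := by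
  unfold Cm
  rw [Xmat_TQ, Matrix.transpose_mul, Matrix.transpose_transpose]
  have h1 : (σ:ℝ)^2 • (1 : Matrix (Fin d) (Fin d) ℝ) = Q * (σ^2 • 1) * Qᵀ := by
    rw [Matrix.mul_smul, Matrix.mul_one, Matrix.smul_mul, hQQT]
  rw [Matrix.mul_add, Matrix.add_mul, ← h1, Matrix.mul_assoc, Matrix.mul_assoc,
    Matrix.mul_assoc]

lemma ridge_TQ (hQQT : Q * Qᵀ = 1) (hQTQ : Qᵀ * Q = 1) (σ : ℝ) (ω : Ctx d n) :
    ridge σ (TQ Q ω) = Q *ᵥ ridge σ ω := by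
  have hQi : Q⁻¹ = Qᵀ := Matrix.inv_eq_right_inv hQQT
  have hQTi : (Qᵀ)⁻¹ = Q := Matrix.inv_eq_right_inv hQTQ
  rw [ridge_eq, ridge_eq, Cm_TQ hQQT, XtY_TQ hQTQ]
  rw [Matrix.mul_inv_rev, Matrix.mul_inv_rev, hQi, hQTi]
  rw [Matrix.mulVec_mulVec, Matrix.mul_assoc, Matrix.mul_assoc, hQTQ, Matrix.mul_one,
    ← Matrix.mulVec_mulVec]

lemma Xmat_Tneg (ω : Ctx d n) : Xmat (Tneg ω) = Xmat ω := rfl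

lemma yv_Tneg (i : Fin n) (ω : Ctx d n) : yv i (Tneg ω) = - yv i ω := by
  unfold yv Tneg
  simp only [neg_dotProduct, Pi.neg_apply]
  ring

lemma Yvec_Tneg (ω : Ctx d n) : Yvec (Tneg ω) = - Yvec ω := by
  funext i; exact yv_Tneg i ω

lemma XtY_Tneg (ω : Ctx d n) : XtY (Tneg ω) = - XtY ω := by
  unfold XtY
  rw [Xmat_Tneg, Yvec_Tneg, Matrix.mulVec_neg]

lemma ridge_Tneg (σ : ℝ) (ω : Ctx d n) : ridge σ (Tneg ω) = - ridge σ ω := by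
  rw [ridge_eq, ridge_eq]
  unfold Cm
  rw [Xmat_Tneg, XtY_Tneg, Matrix.mulVec_neg]

end TQalgebra
end Eq22
namespace Eq22

/-! ### Measurability -/

section Meas

variable {d n : ℕ}

lemma measurable_xv (i : Fin n) (j : Fin d) : Measurable fun ω : Ctx d n => xv i ω j :=
  ((measurable_pi_apply j).comp ((measurable_pi_apply i).comp measurable_fst))

lemma measurable_wv (j : Fin d) : Measurable fun ω : Ctx d n => ω.2.1 j :=
  (measurable_pi_apply j).comp (measurable_fst.comp measurable_snd)

lemma measurable_ev (i : Fin n) : Measurable fun ω : Ctx d n => ω.2.2 i :=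
  (measurable_pi_apply i).comp (measurable_snd.comp measurable_snd)

lemma measurable_yv (i : Fin n) : Measurable fun ω : Ctx d n => yv i ω := by
  unfold yv dotProduct
  exact (Finset.measurable_sum _ fun j _ => (measurable_wv j).mul (measurable_xv i j)).add
    (measurable_ev i)

lemma measurable_XtY (m : Fin d) : Measurable fun ω : Ctx d n => XtY ω m := by
  have : (fun ω : Ctx d n => XtY ω m) = fun ω => ∑ i, xv i ω m * yv i ω := by
    funext ω
    unfold XtY Matrix.mulVec dotProduct Xmat Yvec
    rfl
  rw [this]
  exact Finset.measurable_sum _ fun i _ => (measurable_xv i m).mul (measurable_yv i)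

lemma measurable_tok (i : Fin n) (k : Fin (d+1)) : Measurable fun ω : Ctx d n => tok i ω k := by
  induction k using Fin.lastCases with
  | last =>
    have : (fun ω : Ctx d n => tok i ω (Fin.last d)) = fun ω => yv i ω := by
      funext ω; unfold tok; rw [Fin.snoc_last]
    rw [this]; exact measurable_yv i
  | cast a =>
    have : (fun ω : Ctx d n => tok i ω a.castSucc) = fun ω => xv i ω a := by
      funext ω; unfold tok; rw [Fin.snoc_castSucc]
    rw [this]; exact measurable_xv i a

lemma measurable_G (k l : Fin (d+1)) : Measurable fun ω : Ctx d n => Gmat ω k l := by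
  have : (fun ω : Ctx d n => Gmat ω k l) = fun ω => ∑ i, tok i ω k * tok i ω l := by
    funext ω; unfold Gmat; simp [Matrix.sum_apply, Matrix.vecMulVec_apply]
  rw [this]
  exact Finset.measurable_sum _ fun i _ => (measurable_tok i k).mul (measurable_tok i l)

lemma measurable_det {α : Type*} [MeasurableSpace α] {k : ℕ}
    {M : α → Matrix (Fin k) (Fin k) ℝ} (h : ∀ a b, Measurable fun ω => M ω a b) :
    Measurable fun ω => (M ω).det := by
  have : (fun ω => (M ω).det)
      = fun ω => ∑ p : Equiv.Perm (Fin k), ((Equiv.Perm.sign p : ℤ) : ℝ) * ∏ i, M ω (p i) i := by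
    funext ω
    simp [Matrix.det_apply, Units.smul_def, zsmul_eq_mul]
  rw [this]
  exact Finset.measurable_sum _ fun p _ => measurable_const.mul
    (Finset.measurable_prod _ fun i _ => h _ _)

lemma measurable_Cm_entry (σ : ℝ) (a b : Fin d) :
    Measurable fun ω : Ctx d n => Cm σ ω a b := by
  have : (fun ω : Ctx d n => Cm σ ω a b)
      = fun ω => (∑ i, xv i ω a * xv i ω b) + σ^2 * (1 : Matrix (Fin d) (Fin d) ℝ) a b := by
    funext ω
    unfold Cm Xmat
    simp [Matrix.mul_apply, Matrix.smul_apply, xv, smul_eq_mul]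
  rw [this]
  exact (Finset.measurable_sum _ fun i _ => (measurable_xv i a).mul (measurable_xv i b)).add
    measurable_const

lemma measurable_CmInv (σ : ℝ) (a b : Fin d) :
    Measurable fun ω : Ctx d n => (Cm σ ω)⁻¹ a b := by
  have : (fun ω : Ctx d n => (Cm σ ω)⁻¹ a b)
      = fun ω => Ring.inverse (Cm σ ω).det * (Cm σ ω).adjugate a b := by
    funext ω; rw [Matrix.inv_def, Matrix.smul_apply, smul_eq_mul]
  rw [this]
  have hdet : Measurable fun ω : Ctx d n => (Cm σ ω).det :=
    measurable_det (measurable_Cm_entry σ)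
  have hinv : Measurable fun x : ℝ => Ring.inverse x := by
    simpa [Ring.inverse_eq_inv'] using measurable_inv
  have hadj : Measurable fun ω : Ctx d n => (Cm σ ω).adjugate a b := by
    have : (fun ω : Ctx d n => (Cm σ ω).adjugate a b)
        = fun ω => ((Cm σ ω).updateRow b (Pi.single a 1)).det := by
      funext ω; rw [Matrix.adjugate_apply]
    rw [this]
    apply measurable_det
    intro x y
    by_cases hxb : x = b <;>
      simp [Matrix.updateRow_apply, hxb, measurable_Cm_entry σ x y, measurable_const]
  exact (hinv.comp hdet).mul hadj

lemma measurable_ridge (σ : ℝ) (m : Fin d) : Measurable fun ω : Ctx d n => ridge σ ω m := by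
  have : (fun ω : Ctx d n => ridge σ ω m)
      = fun ω => ∑ j, (Cm σ ω)⁻¹ m j * XtY ω j := by
    funext ω
    rw [ridge_eq]
    rfl
  rw [this]
  exact Finset.measurable_sum _ fun j _ => (measurable_CmInv σ m j).mul (measurable_XtY j)

end Meas
end Eq22
namespace Eq22

/-! ### Measure preservation -/

section MP

variable {d n : ℕ}

lemma mp_const_mul_gaussian {c : ℝ} (hc : c^2 = 1) (v : NNReal) :
    MeasurePreserving (fun x : ℝ => c * x) (gaussianReal 0 v) (gaussianReal 0 v) := by
  refine ⟨measurable_const_mul c, ?_⟩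
  rw [gaussianReal_map_const_mul c]
  congr 1
  · ring
  · ext
    simp [hc]

lemma mp_reindex (e : Equiv.Perm (Fin d)) :
    MeasurePreserving (fun v : Vec d => fun j => v (e j)) (stdGaussian d) (stdGaussian d) := by
  have h := measurePreserving_piCongrLeft (fun _ : Fin d => gaussianReal 0 1) e.symm
  have hcoe : ⇑(MeasurableEquiv.piCongrLeft (fun _ : Fin d => ℝ) e.symm)
      = fun v : Vec d => fun j => v (e j) := by
    funext v j
    simp [MeasurableEquiv.piCongrLeft, Equiv.piCongrLeft, Equiv.piCongrLeft',
      eq_rec_constant]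
  rw [hcoe] at h
  exact h

lemma mp_scale {ε : Fin d → ℝ} (hε : ∀ j, ε j ^ 2 = 1) :
    MeasurePreserving (fun v : Vec d => fun j => ε j * v j) (stdGaussian d) (stdGaussian d) :=
  measurePreserving_pi _ _ (fun j => mp_const_mul_gaussian (hε j) 1)

lemma mp_Qm_mulVec {e : Equiv.Perm (Fin d)} {ε : Fin d → ℝ} (hε : ∀ j, ε j ^ 2 = 1) :
    MeasurePreserving (fun v : Vec d => Qm e ε *ᵥ v) (stdGaussian d) (stdGaussian d) := by
  have : (fun v : Vec d => Qm e ε *ᵥ v)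
      = (fun v : Vec d => fun j => ε j * v j) ∘ (fun v : Vec d => fun j => v (e j)) := by
    funext v
    rw [Qm_mulVec]
    rfl
  rw [this]
  exact (mp_scale hε).comp (mp_reindex e)

lemma mp_TQ (σ : ℝ) {e : Equiv.Perm (Fin d)} {ε : Fin d → ℝ} (hε : ∀ j, ε j ^ 2 = 1) :
    MeasurePreserving (TQ (Qm e ε) : Ctx d n → Ctx d n) (μctx d n σ) (μctx d n σ) := by
  have h1 : MeasurePreserving (fun xs : Fin n → Vec d => fun i => Qm e ε *ᵥ xs i)
      (Measure.pi fun _ : Fin n => stdGaussian d) (Measure.pi fun _ : Fin n => stdGaussian d) :=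
    measurePreserving_pi _ _ (fun _ => mp_Qm_mulVec hε)
  have h2 : MeasurePreserving (fun v : Vec d => Qm e ε *ᵥ v) (stdGaussian d) (stdGaussian d) :=
    mp_Qm_mulVec hε
  exact h1.prod (h2.prod (MeasurePreserving.id _))

lemma mp_neg_pi {k : ℕ} (ν : Measure ℝ) [IsProbabilityMeasure ν]
    (hν : MeasurePreserving (fun x : ℝ => -x) ν ν) :
    MeasurePreserving (fun v : Fin k → ℝ => -v) (Measure.pi fun _ => ν) (Measure.pi fun _ => ν) := by
  have := measurePreserving_pi (fun _ : Fin k => ν) (fun _ : Fin k => ν) (fun _ => hν)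
  convert this using 1
  rfl

lemma mp_Tneg (σ : ℝ) :
    MeasurePreserving (Tneg : Ctx d n → Ctx d n) (μctx d n σ) (μctx d n σ) := by
  have hneg : ∀ v : NNReal, MeasurePreserving (fun x : ℝ => -x) (gaussianReal 0 v)
      (gaussianReal 0 v) := by
    intro v
    have := mp_const_mul_gaussian (c := -1) (by norm_num) v
    simpa using this
  have h1 : MeasurePreserving (fun w : Vec d => -w) (stdGaussian d) (stdGaussian d) :=
    mp_neg_pi _ (hneg 1)
  have h2 : MeasurePreserving (fun v : Fin n → ℝ => -v)
      (Measure.pi fun _ : Fin n => gaussianReal 0 ⟨σ^2, sq_nonneg σ⟩)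
      (Measure.pi fun _ : Fin n => gaussianReal 0 ⟨σ^2, sq_nonneg σ⟩) :=
    mp_neg_pi _ (hneg _)
  exact (MeasurePreserving.id _).prod (h1.prod h2)

/-- Change of variables for the integral under a measure-preserving map. -/
lemma integral_comp_mp {T : Ctx d n → Ctx d n} {σ : ℝ}
    (hT : MeasurePreserving T (μctx d n σ) (μctx d n σ))
    {g : Ctx d n → ℝ} (hg : AEStronglyMeasurable g (μctx d n σ)) :
    ∫ ω, g (T ω) ∂ (μctx d n σ) = ∫ ω, g ω ∂ (μctx d n σ) := by
  have := MeasureTheory.integral_map (φ := T) (μ := μctx d n σ) hT.measurable.aemeasurable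
    (f := g) (by rwa [hT.map_eq])
  rw [hT.map_eq] at this
  exact this.symm

lemma integral_zero_of_odd {T : Ctx d n → Ctx d n} {σ : ℝ}
    (hT : MeasurePreserving T (μctx d n σ) (μctx d n σ))
    {g : Ctx d n → ℝ} (hg : AEStronglyMeasurable g (μctx d n σ))
    (hodd : ∀ ω, g (T ω) = - g ω) :
    ∫ ω, g ω ∂ (μctx d n σ) = 0 := by
  have h1 : ∫ ω, g (T ω) ∂ (μctx d n σ) = ∫ ω, g ω ∂ (μctx d n σ) := integral_comp_mp hT hg
  have h2 : ∫ ω, g (T ω) ∂ (μctx d n σ) = - ∫ ω, g ω ∂ (μctx d n σ) := by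
    calc ∫ ω, g (T ω) ∂ (μctx d n σ) = ∫ ω, - g ω ∂ (μctx d n σ) := by
          congr 1; funext ω; exact hodd ω
      _ = - ∫ ω, g ω ∂ (μctx d n σ) := integral_neg g
  linarith [h1.symm.trans h2]

end MP
end Eq22
namespace Eq22

/-! ### Integrability of polynomial-type functions -/

section Pint

variable {d n : ℕ}

/-- All absolute moments of the (nondegenerate) real Gaussian are finite. -/
lemma integrable_abs_pow_gaussian (m : ℕ) {v : NNReal} (hv : v ≠ 0) :
    Integrable (fun x : ℝ => |x| ^ m) (gaussianReal 0 v) := by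
  rw [gaussianReal_of_var_ne_zero 0 hv]
  rw [integrable_withDensity_iff (measurable_gaussianPDF 0 v)
    (Filter.Eventually.of_forall fun x => ENNReal.ofReal_lt_top)]
  have hv0 : (0:ℝ) < (v:ℝ) := by positivity
  set b : ℝ := (2 * v)⁻¹ with hb
  have hb0 : 0 < b := by positivity
  have hpdf : ∀ x : ℝ, (gaussianPDF 0 v x).toReal
      = (Real.sqrt (2 * Real.pi * v))⁻¹ * Real.exp (-b * x^2) := by
    intro x
    rw [gaussianPDF]
    rw [ENNReal.toReal_ofReal (gaussianPDFReal_nonneg 0 v x)]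
    rw [gaussianPDFReal_def]
    simp only [sub_zero]
    congr 1
    rw [hb]
    ring
  set C : ℝ := m.factorial * (b/2)⁻¹ ^ m with hC
  have hC0 : 0 ≤ C := by positivity
  have key : ∀ x : ℝ, |x| ^ m * Real.exp (-b * x^2)
      ≤ Real.exp (-b * x^2) + C * Real.exp (-(b/2) * x^2) := by
    intro x
    have habs : |x| ^ m ≤ 1 + (x^2) ^ m := by
      rcases le_total |x| 1 with h | h
      · have : |x| ^ m ≤ 1 := pow_le_one₀ (abs_nonneg x) h
        nlinarith [pow_nonneg (sq_nonneg x) m]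
      · have h1 : |x| ^ m ≤ (|x|^2) ^ m := by
          apply pow_le_pow_left₀ (abs_nonneg x)
          nlinarith
        have h2 : (|x|^2 : ℝ) = x^2 := sq_abs x
        rw [h2] at h1
        nlinarith [h1]
    have hexp : (x^2) ^ m ≤ C * Real.exp ((b/2) * x^2) := by
      have hu : (0:ℝ) ≤ (b/2) * x^2 := by positivity
      have := Real.sum_le_exp_of_nonneg hu (m+1)
      have hterm : ((b/2) * x^2)^m / m.factorial ≤ Real.exp ((b/2) * x^2) := by
        calc ((b/2) * x^2)^m / m.factorial
            ≤ ∑ i ∈ Finset.range (m+1), ((b/2) * x^2)^i / i.factorial := by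
              refine Finset.single_le_sum (f := fun i => ((b/2) * x^2)^i / (i.factorial : ℝ))
                (fun i _ => by positivity) ?_
              simp
          _ ≤ Real.exp ((b/2) * x^2) := this
      have hbm : (0:ℝ) < (b/2)^m := by positivity
      rw [hC]
      rw [mul_pow] at hterm
      have hfac : (0:ℝ) < m.factorial := by positivity
      calc (x^2)^m = ((b/2)^m * (x^2)^m / m.factorial) * (m.factorial * ((b/2)^m)⁻¹) := by
            field_simp
        _ ≤ Real.exp ((b/2) * x^2) * (m.factorial * ((b/2)^m)⁻¹) := by
            apply mul_le_mul_of_nonneg_right hterm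
            positivity
        _ = m.factorial * (b/2)⁻¹^m * Real.exp ((b/2) * x^2) := by
            rw [inv_pow]
            ring
    have hsplit : |x| ^ m * Real.exp (-b * x^2)
        ≤ (1 + (x^2)^m) * Real.exp (-b * x^2) := by
      apply mul_le_mul_of_nonneg_right habs (Real.exp_nonneg _)
    calc |x| ^ m * Real.exp (-b * x^2) ≤ (1 + (x^2)^m) * Real.exp (-b * x^2) := hsplit
      _ = Real.exp (-b * x^2) + (x^2)^m * Real.exp (-b * x^2) := by ring
      _ ≤ Real.exp (-b * x^2) + C * Real.exp ((b/2) * x^2) * Real.exp (-b * x^2) := by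
          have := mul_le_mul_of_nonneg_right hexp (Real.exp_nonneg (-b * x^2))
          linarith
      _ = Real.exp (-b * x^2) + C * Real.exp (-(b/2) * x^2) := by
          rw [mul_assoc, ← Real.exp_add]
          have harg : (b/2) * x^2 + -b * x^2 = -(b/2) * x^2 := by ring
          rw [harg]
  have hint : Integrable (fun x : ℝ =>
      (Real.sqrt (2 * Real.pi * v))⁻¹ *
        (Real.exp (-b * x^2) + C * Real.exp (-(b/2) * x^2))) (volume : Measure ℝ) := by
    apply Integrable.const_mul
    exact (integrable_exp_neg_mul_sq hb0).add ((integrable_exp_neg_mul_sq (by positivity :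
      (0:ℝ) < b/2)).const_mul C)
  apply Integrable.mono' hint
  · apply AEStronglyMeasurable.mul
    · exact (measurable_abs.pow_const m).aestronglyMeasurable
    · exact (Measurable.ennreal_toReal (measurable_gaussianPDF 0 v)).aestronglyMeasurable
  · apply Filter.Eventually.of_forall
    intro x
    rw [hpdf x]
    have h0 : (0:ℝ) ≤ (Real.sqrt (2 * Real.pi * v))⁻¹ := by positivity
    rw [Real.norm_eq_abs, abs_of_nonneg (by positivity)]
    calc |x| ^ m * ((Real.sqrt (2 * Real.pi * v))⁻¹ * Real.exp (-b * x^2))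
        = (Real.sqrt (2 * Real.pi * v))⁻¹ * (|x| ^ m * Real.exp (-b * x^2)) := by ring
      _ ≤ (Real.sqrt (2 * Real.pi * v))⁻¹ *
          (Real.exp (-b * x^2) + C * Real.exp (-(b/2) * x^2)) := by
          exact mul_le_mul_of_nonneg_left (key x) h0

end Pint
end Eq22
namespace Eq22

section Pint2

variable {d n : ℕ}

lemma measurePreserving_eval {ι : Type*} [Fintype ι] [DecidableEq ι] {α : ι → Type*}
    [∀ i, MeasurableSpace (α i)] (μ : ∀ i, Measure (α i)) [∀ i, IsProbabilityMeasure (μ i)]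
    (i : ι) : MeasurePreserving (Function.eval i) (Measure.pi μ) (μ i) := by
  refine ⟨measurable_pi_apply i, ?_⟩
  ext s hs
  rw [Measure.map_apply (measurable_pi_apply i) hs]
  have hset : Function.eval i ⁻¹' s
      = Set.pi Set.univ (Function.update (fun j => (Set.univ : Set (α j))) i s) := by
    ext x
    simp only [Set.mem_preimage, Set.mem_pi, Set.mem_univ, true_implies]
    constructor
    · intro hx j
      by_cases hj : j = i
      · subst hj; simpa using hx
      · simp [Function.update_of_ne hj]
    · intro hx
      have := hx i
      simpa using this
  rw [hset, Measure.pi_pi]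
  rw [Finset.prod_eq_single i]
  · simp
  · intro j _ hj
    simp [Function.update_of_ne hj]
  · simp

lemma mp_fst {α β : Type*} [MeasurableSpace α] [MeasurableSpace β] (μ : Measure α)
    (ν : Measure β) [IsProbabilityMeasure ν] [SigmaFinite μ] :
    MeasurePreserving (Prod.fst : α × β → α) (μ.prod ν) μ :=
  ⟨measurable_fst, by simp⟩

lemma mp_snd {α β : Type*} [MeasurableSpace α] [MeasurableSpace β] (μ : Measure α)
    (ν : Measure β) [IsProbabilityMeasure μ] [SigmaFinite ν] :
    MeasurePreserving (Prod.snd : α × β → β) (μ.prod ν) ν :=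
  ⟨measurable_snd, by simp⟩

/-- `Pint σ f`: `f` is measurable, and all powers of `|f|` are integrable. -/
def Pint (d n : ℕ) (σ : ℝ) (f : Ctx d n → ℝ) : Prop :=
  Measurable f ∧ ∀ m : ℕ, Integrable (fun ω => |f ω| ^ m) (μctx d n σ)

namespace Pint

variable {σ : ℝ} {f g : Ctx d n → ℝ}

lemma measurable (hf : Pint d n σ f) : Measurable f := hf.1

lemma integrable (hf : Pint d n σ f) : Integrable f (μctx d n σ) := by
  have h1 := hf.2 1
  simp only [pow_one] at h1
  rwa [← integrable_norm_iff hf.1.aestronglyMeasurable]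

lemma const (c : ℝ) : Pint d n σ (fun _ => c) :=
  ⟨measurable_const, fun m => integrable_const _⟩

lemma neg (hf : Pint d n σ f) : Pint d n σ (fun ω => - f ω) := by
  refine ⟨hf.1.neg, fun m => ?_⟩
  simpa [abs_neg] using hf.2 m

lemma add (hf : Pint d n σ f) (hg : Pint d n σ g) : Pint d n σ (fun ω => f ω + g ω) := by
  refine ⟨hf.1.add hg.1, fun m => ?_⟩
  have hint : Integrable (fun ω => (2:ℝ)^m * (|f ω| ^ m + |g ω| ^ m)) (μctx d n σ) :=
    ((hf.2 m).add (hg.2 m)).const_mul _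
  apply Integrable.mono' hint ((hf.1.add hg.1).abs.pow_const m).aestronglyMeasurable
  apply Filter.Eventually.of_forall
  intro ω
  rw [Real.norm_eq_abs, abs_of_nonneg (by positivity)]
  have h1 : |f ω + g ω| ^ m ≤ (|f ω| + |g ω|) ^ m :=
    pow_le_pow_left₀ (abs_nonneg _) (abs_add_le _ _) m
  have h2 : (|f ω| + |g ω|) ^ m ≤ (2 * max |f ω| |g ω|) ^ m := by
    apply pow_le_pow_left₀ (by positivity)
    rcases le_total |f ω| |g ω| with h | h
    · rw [max_eq_right h]; linarith
    · rw [max_eq_left h]; linarith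
  have h3 : (2 * max |f ω| |g ω|) ^ m = 2^m * max |f ω| |g ω| ^ m := mul_pow 2 _ m
  have h4 : max |f ω| |g ω| ^ m ≤ |f ω| ^ m + |g ω| ^ m := by
    rcases le_total |f ω| |g ω| with h | h
    · rw [max_eq_right h]
      have : (0:ℝ) ≤ |f ω| ^ m := by positivity
      linarith
    · rw [max_eq_left h]
      have : (0:ℝ) ≤ |g ω| ^ m := by positivity
      linarith
  calc |f ω + g ω| ^ m ≤ (2 * max |f ω| |g ω|) ^ m := le_trans h1 h2
    _ = 2^m * max |f ω| |g ω| ^ m := h3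
    _ ≤ 2^m * (|f ω| ^ m + |g ω| ^ m) := by
        apply mul_le_mul_of_nonneg_left h4 (by positivity)

lemma mul (hf : Pint d n σ f) (hg : Pint d n σ g) : Pint d n σ (fun ω => f ω * g ω) := by
  refine ⟨hf.1.mul hg.1, fun m => ?_⟩
  have hint : Integrable (fun ω => |f ω| ^ (2*m) + |g ω| ^ (2*m)) (μctx d n σ) :=
    (hf.2 (2*m)).add (hg.2 (2*m))
  apply Integrable.mono' hint ((hf.1.mul hg.1).abs.pow_const m).aestronglyMeasurable
  apply Filter.Eventually.of_forall
  intro ω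
  rw [Real.norm_eq_abs, abs_of_nonneg (by positivity), Pi.mul_apply, abs_mul, mul_pow]
  have h1 : |f ω| ^ m * |g ω| ^ m ≤ |f ω| ^ (2*m) + |g ω| ^ (2*m) := by
    have h2 : |f ω| ^ (2*m) = (|f ω| ^ m)^2 := by rw [← pow_mul, mul_comm]
    have h3 : |g ω| ^ (2*m) = (|g ω| ^ m)^2 := by rw [← pow_mul, mul_comm]
    rw [h2, h3]
    nlinarith [sq_nonneg (|f ω| ^ m - |g ω| ^ m), pow_nonneg (abs_nonneg (f ω)) m,
      pow_nonneg (abs_nonneg (g ω)) m]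
  exact h1

lemma smul (c : ℝ) (hf : Pint d n σ f) : Pint d n σ (fun ω => c * f ω) :=
  (const c).mul hf

lemma sum {ι : Type*} (s : Finset ι) (F : ι → Ctx d n → ℝ)
    (hF : ∀ i ∈ s, Pint d n σ (F i)) : Pint d n σ (fun ω => ∑ i ∈ s, F i ω) := by
  classical
  induction s using Finset.induction_on with
  | empty => simpa using const 0
  | insert a s' hnotmem ih =>
    have h1 := hF a (Finset.mem_insert_self a s')
    have h2 := ih fun i hi => hF i (Finset.mem_insert_of_mem hi)
    have : (fun ω => ∑ i ∈ insert a s', F i ω)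
        = fun ω => F a ω + ∑ i ∈ s', F i ω := by
      funext ω; rw [Finset.sum_insert hnotmem]
    rw [this]
    exact h1.add h2

end Pint

/-- Integrability of moments transported through a measure-preserving coordinate map. -/
lemma Pint_of_mp {σ : ℝ} {v : NNReal} (hv : v ≠ 0) {φ : Ctx d n → ℝ}
    (hφm : Measurable φ)
    (hφ : MeasurePreserving φ (μctx d n σ) (gaussianReal 0 v)) : Pint d n σ φ := by
  refine ⟨hφm, fun m => ?_⟩
  have : (fun ω => |φ ω| ^ m) = (fun x : ℝ => |x| ^ m) ∘ φ := rfl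
  rw [this]
  rw [hφ.integrable_comp (measurable_abs.pow_const m).aestronglyMeasurable]
  exact integrable_abs_pow_gaussian m hv

lemma Pint_xv {σ : ℝ} (i : Fin n) (j : Fin d) : Pint d n σ (fun ω => xv i ω j) := by
  apply Pint_of_mp one_ne_zero (measurable_xv i j)
  have h1 : MeasurePreserving (Prod.fst : Ctx d n → (Fin n → Vec d)) (μctx d n σ)
      (Measure.pi fun _ : Fin n => stdGaussian d) := mp_fst _ _
  have h2 := (measurePreserving_eval (fun _ : Fin n => stdGaussian d) i).comp h1
  have h3 := (measurePreserving_eval (fun _ : Fin d => gaussianReal 0 1) j).comp h2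
  exact h3

lemma Pint_wv {σ : ℝ} (j : Fin d) : Pint d n σ (fun ω : Ctx d n => ω.2.1 j) := by
  apply Pint_of_mp one_ne_zero (measurable_wv j)
  have h1 : MeasurePreserving (Prod.snd : Ctx d n → _) (μctx d n σ)
      ((stdGaussian d).prod (Measure.pi fun _ : Fin n => gaussianReal 0 ⟨σ^2, sq_nonneg σ⟩)) :=
    mp_snd _ _
  have h2 := (mp_fst (stdGaussian d)
    (Measure.pi fun _ : Fin n => gaussianReal 0 ⟨σ^2, sq_nonneg σ⟩)).comp h1
  exact (measurePreserving_eval (fun _ : Fin d => gaussianReal 0 1) j).comp h2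

lemma Pint_ev {σ : ℝ} (hσ : 0 < σ) (i : Fin n) : Pint d n σ (fun ω : Ctx d n => ω.2.2 i) := by
  have hv : (⟨σ^2, sq_nonneg σ⟩ : NNReal) ≠ 0 := by
    intro hc
    have hc2 : σ^2 = 0 := congrArg Subtype.val hc
    nlinarith
  apply Pint_of_mp hv (measurable_ev i)
  have h1 : MeasurePreserving (Prod.snd : Ctx d n → _) (μctx d n σ)
      ((stdGaussian d).prod (Measure.pi fun _ : Fin n => gaussianReal 0 ⟨σ^2, sq_nonneg σ⟩)) :=
    mp_snd _ _
  have h2 := (mp_snd (stdGaussian d)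
    (Measure.pi fun _ : Fin n => gaussianReal 0 ⟨σ^2, sq_nonneg σ⟩)).comp h1
  exact (measurePreserving_eval (fun _ : Fin n => gaussianReal 0 ⟨σ^2, sq_nonneg σ⟩) i).comp h2

lemma Pint_yv {σ : ℝ} (hσ : 0 < σ) (i : Fin n) : Pint d n σ (fun ω : Ctx d n => yv i ω) := by
  have : (fun ω : Ctx d n => yv i ω)
      = fun ω => (∑ j, ω.2.1 j * xv i ω j) + ω.2.2 i := rfl
  rw [this]
  exact (Pint.sum Finset.univ _ fun j _ => (Pint_wv j).mul (Pint_xv i j)).add (Pint_ev hσ i)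

lemma Pint_XtY {σ : ℝ} (hσ : 0 < σ) (m : Fin d) : Pint d n σ (fun ω : Ctx d n => XtY ω m) := by
  have : (fun ω : Ctx d n => XtY ω m) = fun ω => ∑ i, xv i ω m * yv i ω := by
    funext ω
    unfold XtY Matrix.mulVec dotProduct Xmat Yvec
    rfl
  rw [this]
  exact Pint.sum Finset.univ _ fun i _ => (Pint_xv i m).mul (Pint_yv hσ i)

lemma Pint_tok {σ : ℝ} (hσ : 0 < σ) (i : Fin n) (k : Fin (d+1)) :
    Pint d n σ (fun ω : Ctx d n => tok i ω k) := by
  induction k using Fin.lastCases with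
  | last =>
    have : (fun ω : Ctx d n => tok i ω (Fin.last d)) = fun ω => yv i ω := by
      funext ω; unfold tok; rw [Fin.snoc_last]
    rw [this]; exact Pint_yv hσ i
  | cast a =>
    have : (fun ω : Ctx d n => tok i ω a.castSucc) = fun ω => xv i ω a := by
      funext ω; unfold tok; rw [Fin.snoc_castSucc]
    rw [this]; exact Pint_xv i a

lemma Pint_G {σ : ℝ} (hσ : 0 < σ) (k l : Fin (d+1)) :
    Pint d n σ (fun ω : Ctx d n => Gmat ω k l) := by
  have : (fun ω : Ctx d n => Gmat ω k l) = fun ω => ∑ i, tok i ω k * tok i ω l := by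
    funext ω; unfold Gmat; simp [Matrix.sum_apply, Matrix.vecMulVec_apply]
  rw [this]
  exact Pint.sum Finset.univ _ fun i _ => (Pint_tok hσ i k).mul (Pint_tok hσ i l)

end Pint2
end Eq22
namespace Eq22

section Core

variable {d n : ℕ} {σ : ℝ}

/-- pointwise bound on the ridge coefficients -/
lemma abs_ridge_le (hσ : 0 < σ) (ω : Ctx d n) (m : Fin d) :
    |ridge σ ω m| ≤ σ⁻¹^2 * ∑ j, |XtY ω j| := by
  have hb := ridge_sq_sum_le hσ ω
  have h1 : ridge σ ω m ^ 2 ≤ ∑ j, ridge σ ω j ^ 2 :=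
    Finset.single_le_sum (f := fun j => ridge σ ω j ^ 2) (fun j _ => sq_nonneg _)
      (Finset.mem_univ m)
  have h2 : ∑ j, XtY ω j ^ 2 ≤ (∑ j, |XtY ω j|) ^ 2 := by
    have := Finset.sum_sq_le_sq_sum_of_nonneg (f := fun j => |XtY ω j|)
      (s := Finset.univ) (fun j _ => abs_nonneg _)
    simpa [sq_abs] using this
  have h3 : (σ^2 * ridge σ ω m) ^ 2 ≤ ((∑ j, |XtY ω j|)) ^ 2 := by
    have : (σ^2 * ridge σ ω m)^2 = σ^4 * ridge σ ω m ^2 := by ring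
    rw [this]
    have h4 : σ^4 * ridge σ ω m ^ 2 ≤ σ^4 * ∑ j, ridge σ ω j ^ 2 := by
      apply mul_le_mul_of_nonneg_left h1 (by positivity)
    linarith
  have h5 : |σ^2 * ridge σ ω m| ≤ ∑ j, |XtY ω j| := by
    have := Real.sqrt_le_sqrt h3
    rwa [Real.sqrt_sq_eq_abs, Real.sqrt_sq (Finset.sum_nonneg fun j _ => abs_nonneg _)] at this
  rw [abs_mul, abs_of_nonneg (sq_nonneg σ)] at h5
  have hσ2 : (0:ℝ) < σ^2 := by positivity
  calc |ridge σ ω m| = σ⁻¹^2 * (σ^2 * |ridge σ ω m|) := by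
        field_simp
    _ ≤ σ⁻¹^2 * ∑ j, |XtY ω j| := by
        apply mul_le_mul_of_nonneg_left h5 (by positivity)

lemma integrable_mul_ridge (hσ : 0 < σ) {f : Ctx d n → ℝ} (hf : Pint d n σ f) (m : Fin d) :
    Integrable (fun ω => f ω * ridge σ ω m) (μctx d n σ) := by
  have hint : Integrable (fun ω => σ⁻¹^2 * ∑ j, |f ω * XtY ω j|) (μctx d n σ) := by
    apply Integrable.const_mul
    apply integrable_finset_sum
    intro j _
    exact (hf.mul (Pint_XtY hσ j)).integrable.abs
  apply Integrable.mono' hint (hf.1.mul (measurable_ridge σ m)).aestronglyMeasurable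
  apply Filter.Eventually.of_forall
  intro ω
  rw [Real.norm_eq_abs, Pi.mul_apply, abs_mul]
  calc |f ω| * |ridge σ ω m| ≤ |f ω| * (σ⁻¹^2 * ∑ j, |XtY ω j|) :=
        mul_le_mul_of_nonneg_left (abs_ridge_le hσ ω m) (abs_nonneg _)
    _ = σ⁻¹^2 * ∑ j, |f ω * XtY ω j| := by
        rw [Finset.mul_sum, Finset.mul_sum]
        rw [Finset.mul_sum]
        apply Finset.sum_congr rfl
        intro j _
        rw [abs_mul]
        ring

/-! ### Vanishing integrals by symmetry -/

lemma integral_mul_ridge_zero_even {g : Ctx d n → ℝ} (hg : Measurable g)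
    (heven : ∀ ω, g (Tneg ω) = g ω) (m : Fin d) :
    ∫ ω, g ω * ridge σ ω m ∂ (μctx d n σ) = 0 := by
  apply integral_zero_of_odd (mp_Tneg σ)
    ((hg.mul (measurable_ridge σ m)).aestronglyMeasurable)
  intro ω
  have h1 := congrFun (ridge_Tneg σ ω) m
  simp only [Pi.neg_apply] at h1
  simp only [Pi.mul_apply]
  rw [heven, h1]
  ring

lemma integral_mul_XtY_zero_even {g : Ctx d n → ℝ} (hg : Measurable g)
    (heven : ∀ ω, g (Tneg ω) = g ω) (m : Fin d) :
    ∫ ω, g ω * XtY ω m ∂ (μctx d n σ) = 0 := by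
  apply integral_zero_of_odd (mp_Tneg σ)
    ((hg.mul (measurable_XtY m)).aestronglyMeasurable)
  intro ω
  have h1 := congrFun (XtY_Tneg ω) m
  simp only [Pi.neg_apply] at h1
  simp only [Pi.mul_apply]
  rw [heven, h1]
  ring

lemma flip_hε (a : Fin d) : ∀ j : Fin d, ((fun j : Fin d => if j = a then -(1:ℝ) else 1) j) ^ 2 = 1 := by
  intro j
  by_cases hj : j = a <;> simp [hj]

lemma integral_XtY_mul_ridge_flip (hσ : 0 < σ) {a m : Fin d} (hma : m ≠ a) :
    ∫ ω, XtY ω a * ridge σ ω m ∂ (μctx d n σ) = 0 := by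
  set Q := Qm (Equiv.refl (Fin d)) (fun j : Fin d => if j = a then -(1:ℝ) else 1) with hQdef
  have hQQT := Qm_mul_transpose (e := Equiv.refl (Fin d)) (flip_hε a)
  have hQTQ := Qm_transpose_mul (e := Equiv.refl (Fin d)) (flip_hε a)
  apply integral_zero_of_odd (mp_TQ σ (e := Equiv.refl (Fin d)) (flip_hε a))
    (((measurable_XtY a).mul (measurable_ridge σ m)).aestronglyMeasurable)
  intro ω
  have h1 : XtY (TQ Q ω) a = - XtY ω a := by
    rw [hQdef, XtY_TQ hQTQ, Qm_mulVec]
    simp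
  have h2 : ridge σ (TQ Q ω) m = ridge σ ω m := by
    rw [hQdef, ridge_TQ hQQT hQTQ, Qm_mulVec]
    simp [hma]
  simp only [Pi.mul_apply]
  rw [← hQdef, h1, h2]
  ring

lemma integral_XtY_mul_XtY_flip (hσ : 0 < σ) {a m : Fin d} (hma : m ≠ a) :
    ∫ ω, XtY ω a * XtY ω m ∂ (μctx d n σ) = 0 := by
  set Q := Qm (Equiv.refl (Fin d)) (fun j : Fin d => if j = a then -(1:ℝ) else 1) with hQdef
  have hQTQ := Qm_transpose_mul (e := Equiv.refl (Fin d)) (flip_hε a)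
  apply integral_zero_of_odd (mp_TQ σ (e := Equiv.refl (Fin d)) (flip_hε a))
    (((measurable_XtY a).mul (measurable_XtY m)).aestronglyMeasurable)
  intro ω
  have h1 : XtY (TQ Q ω) a = - XtY ω a := by
    rw [hQdef, XtY_TQ hQTQ, Qm_mulVec]
    simp
  have h2 : XtY (TQ Q ω) m = XtY ω m := by
    rw [hQdef, XtY_TQ hQTQ, Qm_mulVec]
    simp [hma]
  simp only [Pi.mul_apply]
  rw [← hQdef, h1, h2]
  ring

/-! ### Swap symmetry -/

lemma swap_hε (d : ℕ) : ∀ j : Fin d, ((fun _ : Fin d => (1:ℝ)) j) ^ 2 = 1 := fun _ => one_pow 2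

lemma integral_XtY_mul_ridge_swap (hσ : 0 < σ) (a b : Fin d) :
    ∫ ω, XtY ω a * ridge σ ω a ∂ (μctx d n σ)
      = ∫ ω, XtY ω b * ridge σ ω b ∂ (μctx d n σ) := by
  set Q := Qm (Equiv.swap a b) (fun _ : Fin d => (1:ℝ)) with hQ
  have hQQT := Qm_mul_transpose (e := Equiv.swap a b) (swap_hε d)
  have hQTQ := Qm_transpose_mul (e := Equiv.swap a b) (swap_hε d)
  have h := integral_comp_mp (mp_TQ (n := n) σ (e := Equiv.swap a b) (swap_hε d))
    (((measurable_XtY b).mul (measurable_ridge σ b)).aestronglyMeasurable)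
  simp only [Pi.mul_apply] at h
  rw [← h]
  congr 1
  funext ω
  have h1 : XtY (TQ Q ω) b = XtY ω a := by
    rw [hQ, XtY_TQ hQTQ, Qm_mulVec]
    simp [Equiv.swap_apply_right]
  have h2 : ridge σ (TQ Q ω) b = ridge σ ω a := by
    rw [hQ, ridge_TQ hQQT hQTQ, Qm_mulVec]
    simp [Equiv.swap_apply_right]
  rw [h1, h2]

lemma integral_XtY_mul_XtY_swap (hσ : 0 < σ) (a b : Fin d) :
    ∫ ω, XtY ω a * XtY ω a ∂ (μctx d n σ)
      = ∫ ω, XtY ω b * XtY ω b ∂ (μctx d n σ) := by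
  set Q := Qm (Equiv.swap a b) (fun _ : Fin d => (1:ℝ)) with hQ
  have hQTQ := Qm_transpose_mul (e := Equiv.swap a b) (swap_hε d)
  have h := integral_comp_mp (mp_TQ (n := n) σ (e := Equiv.swap a b) (swap_hε d))
    (((measurable_XtY b).mul (measurable_XtY b)).aestronglyMeasurable)
  simp only [Pi.mul_apply] at h
  rw [← h]
  congr 1
  funext ω
  have h1 : XtY (TQ Q ω) b = XtY ω a := by
    rw [hQ, XtY_TQ hQTQ, Qm_mulVec]
    simp [Equiv.swap_apply_right]
  rw [h1]

end Core
end Eq22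
namespace Eq22

section Central

variable {d n : ℕ} {σ : ℝ}

lemma den_pointwise (ω : Ctx d n) :
    Yvec ω ⬝ᵥ ((Xmat ω * (Xmat ω)ᵀ) *ᵥ Yvec ω) = ∑ m, XtY ω m * XtY ω m := by
  rw [← Matrix.mulVec_mulVec, Matrix.dotProduct_mulVec]
  have h1 : Yvec ω ᵥ* Xmat ω = XtY ω := (Matrix.mulVec_transpose (Xmat ω) (Yvec ω)).symm
  have h2 : (Xmat ω)ᵀ *ᵥ Yvec ω = XtY ω := rfl
  rw [h1, h2]
  rfl

lemma num_pointwise (ω : Ctx d n) :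
    ridge σ ω ⬝ᵥ XtY ω = ∑ m, XtY ω m * ridge σ ω m := by
  unfold dotProduct
  apply Finset.sum_congr rfl
  intro m _
  ring

lemma integral_num (hd : 1 ≤ d) (hσ : 0 < σ) (a : Fin d) :
    ∫ ω, ridge σ ω ⬝ᵥ XtY ω ∂ (μctx d n σ)
      = (d:ℝ) * ∫ ω, XtY ω a * ridge σ ω a ∂ (μctx d n σ) := by
  have h1 : ∫ ω, ridge σ ω ⬝ᵥ XtY ω ∂ (μctx d n σ)
      = ∑ m, ∫ ω, XtY ω m * ridge σ ω m ∂ (μctx d n σ) := by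
    rw [← integral_finset_sum]
    · congr 1
      funext ω
      exact num_pointwise ω
    · intro m _
      exact integrable_mul_ridge hσ (Pint_XtY hσ m) m
  rw [h1]
  have h2 : ∀ m : Fin d, ∫ ω, XtY ω m * ridge σ ω m ∂ (μctx d n σ)
      = ∫ ω, XtY ω a * ridge σ ω a ∂ (μctx d n σ) := by
    intro m
    exact integral_XtY_mul_ridge_swap hσ m a
  rw [Finset.sum_congr rfl fun m _ => h2 m]
  rw [Finset.sum_const, Finset.card_univ, Fintype.card_fin, nsmul_eq_mul]

lemma integral_den (hd : 1 ≤ d) (hσ : 0 < σ) (a : Fin d) :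
    ∫ ω, Yvec ω ⬝ᵥ ((Xmat ω * (Xmat ω)ᵀ) *ᵥ Yvec ω) ∂ (μctx d n σ)
      = (d:ℝ) * ∫ ω, XtY ω a * XtY ω a ∂ (μctx d n σ) := by
  have h1 : ∫ ω, Yvec ω ⬝ᵥ ((Xmat ω * (Xmat ω)ᵀ) *ᵥ Yvec ω) ∂ (μctx d n σ)
      = ∑ m, ∫ ω, XtY ω m * XtY ω m ∂ (μctx d n σ) := by
    rw [← integral_finset_sum]
    · congr 1
      funext ω
      exact den_pointwise ω
    · intro m _
      exact ((Pint_XtY hσ m).mul (Pint_XtY hσ m)).integrable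
  rw [h1]
  rw [Finset.sum_congr rfl fun m _ => integral_XtY_mul_XtY_swap hσ m a]
  rw [Finset.sum_const, Finset.card_univ, Fintype.card_fin, nsmul_eq_mul]

/-- Central identity for the `XtY` block of `G`. -/
lemma central (hd : 1 ≤ d) (hσ : 0 < σ) (a m : Fin d) :
    ∫ ω, XtY ω a * ridge σ ω m ∂ (μctx d n σ)
      = etaStar d n σ * ∫ ω, XtY ω a * XtY ω m ∂ (μctx d n σ) := by
  by_cases hma : m = a
  · subst hma
    set c := ∫ ω, XtY ω m * ridge σ ω m ∂ (μctx d n σ) with hc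
    set c' := ∫ ω, XtY ω m * XtY ω m ∂ (μctx d n σ) with hc'
    have heta : etaStar d n σ = ((d:ℝ) * c) / ((d:ℝ) * c') := by
      rw [etaStar, integral_num hd hσ m, integral_den hd hσ m]
    by_cases hc'0 : c' = 0
    · have hzero : (fun ω => XtY ω m * XtY ω m) =ᵐ[μctx d n σ] 0 := by
        rw [← integral_eq_zero_iff_of_nonneg]
        · exact hc'.symm ▸ hc'0
        · intro ω
          exact mul_self_nonneg _
        · exact ((Pint_XtY hσ m).mul (Pint_XtY hσ m)).integrable
      have hXzero : (fun ω => XtY ω m) =ᵐ[μctx d n σ] 0 := by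
        filter_upwards [hzero] with ω hω
        have : XtY ω m * XtY ω m = 0 := hω
        exact mul_self_eq_zero.mp this
      have hczero : c = 0 := by
        rw [hc]
        have : (fun ω => XtY ω m * ridge σ ω m) =ᵐ[μctx d n σ] 0 := by
          filter_upwards [hXzero] with ω hω
          simp only [Pi.zero_apply]
          rw [show XtY ω m = 0 from hω, zero_mul]
        rw [integral_congr_ae this]
        simp
      rw [hczero, hc'0, mul_zero]
    · have hd0 : (d:ℝ) ≠ 0 := by
        have : 0 < d := hd
        positivity
      rw [heta]
      field_simp
  · rw [integral_XtY_mul_ridge_flip hσ hma, integral_XtY_mul_XtY_flip hσ hma, mul_zero]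

end Central
end Eq22
namespace Eq22

section Key

variable {d n : ℕ} {σ : ℝ}

lemma Gmat_cc (ω : Ctx d n) (a b : Fin d) :
    Gmat ω a.castSucc b.castSucc = ∑ i, xv i ω a * xv i ω b := by
  unfold Gmat tok
  simp [Matrix.sum_apply, Matrix.vecMulVec_apply, Fin.snoc_castSucc]

lemma Gmat_cl (ω : Ctx d n) (a : Fin d) :
    Gmat ω a.castSucc (Fin.last d) = XtY ω a := by
  unfold Gmat tok
  simp only [Matrix.sum_apply, Matrix.vecMulVec_apply, Fin.snoc_castSucc, Fin.snoc_last]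
  unfold XtY Matrix.mulVec dotProduct Xmat Yvec
  simp [Matrix.transpose_apply]

lemma Gmat_lc (ω : Ctx d n) (b : Fin d) :
    Gmat ω (Fin.last d) b.castSucc = XtY ω b := by
  unfold Gmat tok
  simp only [Matrix.sum_apply, Matrix.vecMulVec_apply, Fin.snoc_castSucc, Fin.snoc_last]
  unfold XtY Matrix.mulVec dotProduct Xmat Yvec
  simp [Matrix.transpose_apply, mul_comm]

lemma Gmat_ll (ω : Ctx d n) :
    Gmat ω (Fin.last d) (Fin.last d) = ∑ i, yv i ω * yv i ω := by
  unfold Gmat tok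
  simp [Matrix.sum_apply, Matrix.vecMulVec_apply, Fin.snoc_last]

/-- The per-entry key identity. -/
lemma key (hd : 1 ≤ d) (hσ : 0 < σ) (k l : Fin (d+1)) (m : Fin d) :
    ∫ ω, Gmat ω k l * ridge σ ω m ∂ (μctx d n σ)
      = etaStar d n σ * ∫ ω, Gmat ω k l * XtY ω m ∂ (μctx d n σ) := by
  induction k using Fin.lastCases with
  | last =>
    induction l using Fin.lastCases with
    | last =>
      have heven : ∀ ω : Ctx d n, Gmat (Tneg ω) (Fin.last d) (Fin.last d)
          = Gmat ω (Fin.last d) (Fin.last d) := by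
        intro ω
        rw [Gmat_ll, Gmat_ll]
        apply Finset.sum_congr rfl
        intro i _
        rw [yv_Tneg]
        ring
      rw [integral_mul_ridge_zero_even (measurable_G _ _) heven m,
        integral_mul_XtY_zero_even (measurable_G _ _) heven m, mul_zero]
    | cast b =>
      have h1 : (fun ω : Ctx d n => Gmat ω (Fin.last d) b.castSucc * ridge σ ω m)
          = fun ω => XtY ω b * ridge σ ω m := by
        funext ω; rw [Gmat_lc]
      have h2 : (fun ω : Ctx d n => Gmat ω (Fin.last d) b.castSucc * XtY ω m)
          = fun ω => XtY ω b * XtY ω m := by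
        funext ω; rw [Gmat_lc]
      rw [show (∫ ω, Gmat ω (Fin.last d) b.castSucc * ridge σ ω m ∂ (μctx d n σ))
          = ∫ ω, XtY ω b * ridge σ ω m ∂ (μctx d n σ) from by rw [h1],
        show (∫ ω, Gmat ω (Fin.last d) b.castSucc * XtY ω m ∂ (μctx d n σ))
          = ∫ ω, XtY ω b * XtY ω m ∂ (μctx d n σ) from by rw [h2]]
      exact central hd hσ b m
  | cast a =>
    induction l using Fin.lastCases with
    | last =>
      have h1 : (fun ω : Ctx d n => Gmat ω a.castSucc (Fin.last d) * ridge σ ω m)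
          = fun ω => XtY ω a * ridge σ ω m := by
        funext ω; rw [Gmat_cl]
      have h2 : (fun ω : Ctx d n => Gmat ω a.castSucc (Fin.last d) * XtY ω m)
          = fun ω => XtY ω a * XtY ω m := by
        funext ω; rw [Gmat_cl]
      rw [show (∫ ω, Gmat ω a.castSucc (Fin.last d) * ridge σ ω m ∂ (μctx d n σ))
          = ∫ ω, XtY ω a * ridge σ ω m ∂ (μctx d n σ) from by rw [h1],
        show (∫ ω, Gmat ω a.castSucc (Fin.last d) * XtY ω m ∂ (μctx d n σ))
          = ∫ ω, XtY ω a * XtY ω m ∂ (μctx d n σ) from by rw [h2]]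
      exact central hd hσ a m
    | cast b =>
      have heven : ∀ ω : Ctx d n, Gmat (Tneg ω) a.castSucc b.castSucc
          = Gmat ω a.castSucc b.castSucc := by
        intro ω
        rw [Gmat_cc, Gmat_cc]
        rfl
      rw [integral_mul_ridge_zero_even (measurable_G _ _) heven m,
        integral_mul_XtY_zero_even (measurable_G _ _) heven m, mul_zero]

lemma mulVec_expand (ω : Ctx d n) (A : Matrix (Fin d) (Fin (d+1)) ℝ) (u : Vec d)
    (k : Fin (d+1)) :
    ((Gmat ω).mulVec (Aᵀ.mulVec u)) k = ∑ l, ∑ m, Gmat ω k l * (A m l * u m) := by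
  unfold Matrix.mulVec dotProduct
  simp only [Matrix.transpose_apply]
  apply Finset.sum_congr rfl
  intro l _
  rw [Finset.mul_sum]

end Key
end Eq22

open Eq22

/-- **Key gradient identity (Equation 22).**  For every `A ∈ ℝ^{d×(d+1)}`,
`E[G Aᵀ ŵ] = η* · E[G Aᵀ Xᵀ y⃗]`, where `η* = E[ŵᵀXᵀy⃗] / E[y⃗ᵀXXᵀy⃗]`. -/
theorem expectation_G_At_ridge_eq (d n : ℕ) (hd : 1 ≤ d) (hn : 1 ≤ n)
    (σ : ℝ) (hσ : 0 < σ) (A : Matrix (Fin d) (Fin (d+1)) ℝ) :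
    (fun k : Fin (d+1) => ∫ ω, (Gmat ω).mulVec (Aᵀ.mulVec (ridge σ ω)) k ∂ (μctx d n σ))
      = fun k : Fin (d+1) =>
          etaStar d n σ * ∫ ω, (Gmat ω).mulVec (Aᵀ.mulVec (XtY ω)) k ∂ (μctx d n σ) := by
  funext k
  have hInt1 : ∀ (l : Fin (d+1)) (m : Fin d),
      Integrable (fun ω => Gmat ω k l * (A m l * ridge σ ω m)) (μctx d n σ) := by
    intro l m
    have h : (fun ω : Ctx d n => Gmat ω k l * (A m l * ridge σ ω m))
        = fun ω => A m l * (Gmat ω k l * ridge σ ω m) := by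
      funext ω; ring
    rw [h]
    exact (integrable_mul_ridge hσ (Pint_G hσ k l) m).const_mul _
  have hInt2 : ∀ (l : Fin (d+1)) (m : Fin d),
      Integrable (fun ω => Gmat ω k l * (A m l * XtY ω m)) (μctx d n σ) := by
    intro l m
    have h : (fun ω : Ctx d n => Gmat ω k l * (A m l * XtY ω m))
        = fun ω => A m l * (Gmat ω k l * XtY ω m) := by
      funext ω; ring
    rw [h]
    exact (((Pint_G hσ k l).mul (Pint_XtY hσ m)).integrable).const_mul _
  calc ∫ ω, (Gmat ω).mulVec (Aᵀ.mulVec (ridge σ ω)) k ∂ (μctx d n σ)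
      = ∫ ω, ∑ l, ∑ m, Gmat ω k l * (A m l * ridge σ ω m) ∂ (μctx d n σ) := by
        congr 1
        funext ω
        exact mulVec_expand ω A (ridge σ ω) k
    _ = ∑ l, ∑ m, ∫ ω, Gmat ω k l * (A m l * ridge σ ω m) ∂ (μctx d n σ) := by
        rw [integral_finset_sum _ (fun l _ => integrable_finset_sum _ (fun m _ => hInt1 l m))]
        exact Finset.sum_congr rfl fun l _ => integral_finset_sum _ (fun m _ => hInt1 l m)
    _ = ∑ l, ∑ m, A m l * (etaStar d n σ * ∫ ω, Gmat ω k l * XtY ω m ∂ (μctx d n σ)) := by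
        apply Finset.sum_congr rfl
        intro l _
        apply Finset.sum_congr rfl
        intro m _
        have h : (fun ω : Ctx d n => Gmat ω k l * (A m l * ridge σ ω m))
            = fun ω => A m l * (Gmat ω k l * ridge σ ω m) := by
          funext ω; ring
        rw [h, MeasureTheory.integral_const_mul, key hd hσ k l m]
    _ = etaStar d n σ * ∑ l, ∑ m, ∫ ω, Gmat ω k l * (A m l * XtY ω m) ∂ (μctx d n σ) := by
        rw [Finset.mul_sum]
        apply Finset.sum_congr rfl
        intro l _
        rw [Finset.mul_sum]
        apply Finset.sum_congr rfl
        intro m _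
        have h : (fun ω : Ctx d n => Gmat ω k l * (A m l * XtY ω m))
            = fun ω => A m l * (Gmat ω k l * XtY ω m) := by
          funext ω; ring
        rw [h, MeasureTheory.integral_const_mul]
        ring
    _ = etaStar d n σ * ∫ ω, ∑ l, ∑ m, Gmat ω k l * (A m l * XtY ω m) ∂ (μctx d n σ) := by
        congr 1
        rw [integral_finset_sum _ (fun l _ => integrable_finset_sum _ (fun m _ => hInt2 l m))]
        exact (Finset.sum_congr rfl fun l _ => integral_finset_sum _ (fun m _ => hInt2 l m)).symm
    _ = etaStar d n σ * ∫ ω, (Gmat ω).mulVec (Aᵀ.mulVec (XtY ω)) k ∂ (μctx d n σ) := by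
        congr 1
        apply MeasureTheory.integral_congr_ae
        apply Filter.Eventually.of_forall
        intro ω
        exact (mulVec_expand ω A (XtY ω) k).symm
end
end
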